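/- (No transition point for completely monotone potentials.) Let μ be a nonnegative, nonzero Borel measure on (0,∞) such that for every A > 0 the function s ↦ H(As) is μ-integrable, and define E₂(A) := (1/2) ∫₀^∞ H(As) dμ(s). Then E₂(A) > 0 for every A > 0; in particular E₂ has no zero and no sign change. -/

import Mathlib

open MeasureTheory

/-- The Jacobi theta function `θ₃(q) = Σ_{j ∈ ℤ} q^(j²)`. -/
noncomputable def theta3 (q : ℝ) : ℝ := ∑' j : ℤ, q ^ (j.natAbs ^ 2)

/-- `Θ(t) := θ₃(e^{−t})`. -/
noncomputable def Θ (t : ℝ) : ℝ := theta3 (Real.exp (-t))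

/-- `H(t) := t·Θ(t)·Θ'(t) + t²·Θ(t)·Θ''(t) − t²·(Θ'(t))²`. -/
noncomputable def Hfun (t : ℝ) : ℝ :=
  t * Θ t * deriv Θ t + t ^ 2 * Θ t * iteratedDeriv 2 Θ t - t ^ 2 * (deriv Θ t) ^ 2

/-!
Write `Fₖ = thetaMoment k`, i.e. `Fₖ(t) = ∑_{j ∈ ℤ} j^(2k) e^(-j² t)`, so that `Θ = F₀`,
`Θ' = -F₁`, `Θ'' = F₂`, and let `G = thetaElasticity`, i.e. `G(t) = t Θ'(t) / Θ(t)`.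
Then `H(t) = t Θ(t)² G'(t)`, so it suffices that `G' > 0` on `(0, ∞)`.

Jacobi's inversion formula `Θ(π²/t) = √(t/π) Θ(t)` says that `log Θ(t) + (log t)/4` is invariant
under `t ↦ π²/t`. Differentiating (twice) gives `G(π²/t) = -G(t) - 1/2` and
`t G'(t) = (π²/t) G'(π²/t)`, which reduces everything to `t > 3`. There
`G' = ((t F₂ - F₁) F₀ - t F₁²) / F₀²`, and `F₂ ≥ F₁`, `F₀ ≥ 1`, `t F₁ ≤ 2` (the terms `j ≠ 0` of
`F₁` are dominated by a geometric series in `e^(-t)`) bound the numerator below by `F₁ (t - 3) > 0`.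
-/

open Real

lemma mul_deriv_div_eq_of_comp_div_eq {f : ℝ → ℝ} {a b c t : ℝ} (hc : 0 < c)
    (hf : ∀ y, 0 < y → DifferentiableAt ℝ f y) (h : ∀ y, 0 < y → f (c / y) = a * f y + b)
    (ht : 0 < t) : c / t * deriv f (c / t) = -a * (t * deriv f t) := by
  have hinv : HasDerivAt (fun y => c / y) (-(c / t ^ 2)) t := by
    simpa [div_eq_mul_inv] using (hasDerivAt_inv ht.ne').const_mul c
  have hcomp := (hf (c / t) (div_pos hc ht)).hasDerivAt.comp t hinv
  have heq : (fun y => a * f y + b) =ᶠ[nhds t] f ∘ fun y => c / y := by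
    filter_upwards [Ioi_mem_nhds ht] with y hy
    exact (h y hy).symm
  have hrhs := (((hf t ht).hasDerivAt.const_mul a).add_const b).congr_of_eventuallyEq heq.symm
  have huniq := hcomp.unique hrhs
  field_simp at huniq ⊢
  linear_combination -huniq

lemma setIntegral_pos_of_forall_pos {α : Type*} [MeasurableSpace α] {μ : Measure α}
    {s : Set α} {f : α → ℝ} (hs : MeasurableSet s) (hμs : μ s ≠ 0) (hf : IntegrableOn f s μ)
    (hpos : ∀ x ∈ s, 0 < f x) : 0 < ∫ x in s, f x ∂μ := by
  rw [setIntegral_pos_iff_support_of_nonneg_ae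
    (ae_restrict_of_forall_mem hs fun x hx => (hpos x hx).le) hf,
    Set.inter_eq_right.mpr (show s ⊆ Function.support f from fun x hx => (hpos x hx).ne')]
  exact pos_iff_ne_zero.mpr hμs

lemma sq_mul_exp_neg_sq_mul_le_exp_neg_mul {m t : ℝ} (hm : 1 ≤ m) (ht : 2 ≤ t) :
    m ^ 2 * exp (-m ^ 2 * t) ≤ exp (-(m * t)) := by
  have hm_le : m ≤ exp (m - 1) := by linarith [add_one_le_exp (m - 1)]
  have hsq : m ^ 2 ≤ exp (2 * (m - 1)) := by
    rw [show 2 * (m - 1) = (m - 1) + (m - 1) by ring, exp_add]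
    exact pow_two m ▸ mul_le_mul hm_le hm_le (by linarith) (exp_pos _).le
  have hexp : 2 * (m - 1) + -m ^ 2 * t ≤ -(m * t) := by
    nlinarith [mul_nonneg (sub_nonneg.mpr hm) (by nlinarith : (0 : ℝ) ≤ m * t - 2)]
  calc m ^ 2 * exp (-m ^ 2 * t) ≤ exp (2 * (m - 1)) * exp (-m ^ 2 * t) := by gcongr
    _ ≤ exp (-(m * t)) := by rw [← exp_add]; exact exp_le_exp.mpr hexp

noncomputable def thetaMoment (k : ℕ) (t : ℝ) : ℝ :=
  ∑' j : ℤ, ((j : ℝ) ^ 2) ^ k * exp (-(j : ℝ) ^ 2 * t)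

section thetaMoment

variable {t : ℝ}

lemma summable_thetaMoment (k : ℕ) (ht : 0 < t) :
    Summable fun j : ℤ => ((j : ℝ) ^ 2) ^ k * exp (-(j : ℝ) ^ 2 * t) := by
  refine (summable_pow_mul_jacobiTheta₂_term_bound 0 (div_pos ht pi_pos) (2 * k)).congr
    fun j => ?_
  rw [pow_mul, Int.cast_abs, sq_abs]
  congr 2
  field_simp
  ring

lemma thetaMoment_nonneg (k : ℕ) (t : ℝ) : 0 ≤ thetaMoment k t :=
  tsum_nonneg fun j => by positivity

lemma one_le_thetaMoment_zero (ht : 0 < t) : 1 ≤ thetaMoment 0 t := by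
  unfold thetaMoment
  simpa using (summable_thetaMoment 0 ht).le_tsum 0 fun j _ => by positivity

lemma thetaMoment_pos (k : ℕ) (ht : 0 < t) : 0 < thetaMoment k t :=
  (summable_thetaMoment k ht).tsum_pos (fun j => by positivity) 1 (by simp [exp_pos])

lemma thetaMoment_le_thetaMoment_succ {k : ℕ} (hk : k ≠ 0) (ht : 0 < t) :
    thetaMoment k t ≤ thetaMoment (k + 1) t := by
  refine (summable_thetaMoment k ht).tsum_le_tsum (fun j => ?_) (summable_thetaMoment (k + 1) ht)
  refine mul_le_mul_of_nonneg_right ?_ (exp_pos _).le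
  rcases eq_or_ne j 0 with rfl | hj
  · simp [zero_pow hk]
  · refine pow_le_pow_right₀ ?_ k.le_succ
    rw [one_le_sq_iff_one_le_abs, ← Int.cast_abs]
    exact_mod_cast Int.one_le_abs hj

lemma hasDerivAt_thetaMoment (k : ℕ) (ht : 0 < t) :
    HasDerivAt (thetaMoment k) (-thetaMoment (k + 1) t) t := by
  have hmem : t ∈ Set.Ioi (t / 2) := half_lt_self ht
  have key := hasDerivAt_tsum_of_isPreconnected (summable_thetaMoment (k + 1) (half_pos ht))
    isOpen_Ioi isPreconnected_Ioi
    (g := fun (j : ℤ) (y : ℝ) => ((j : ℝ) ^ 2) ^ k * exp (-(j : ℝ) ^ 2 * y))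
    (g' := fun (j : ℤ) (y : ℝ) => -(((j : ℝ) ^ 2) ^ (k + 1) * exp (-(j : ℝ) ^ 2 * y)))
    (fun j y _ => ?_) (fun j y hy => ?_) hmem (summable_thetaMoment k ht) hmem
  · rw [tsum_neg] at key
    exact key
  · refine ((((hasDerivAt_id' y).const_mul (-(j : ℝ) ^ 2)).exp).const_mul
      (((j : ℝ) ^ 2) ^ k)).congr_deriv (by ring)
  · rw [norm_neg, Real.norm_of_nonneg (by positivity)]
    have : t / 2 < y := hy
    gcongr (_ * exp ?_)
    nlinarith [sq_nonneg (j : ℝ)]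

lemma thetaMoment_zero_inversion (ht : 0 < t) :
    thetaMoment 0 (π ^ 2 / t) = √(t / π) * thetaMoment 0 t := by
  have hπ := pi_pos
  have key := Real.tsum_exp_neg_mul_int_sq (div_pos ht hπ)
  have h1 : thetaMoment 0 t = ∑' n : ℤ, exp (-π * (t / π) * (n : ℝ) ^ 2) := by
    unfold thetaMoment; congr 1; ext n; field_simp
  have h2 : thetaMoment 0 (π ^ 2 / t) = ∑' n : ℤ, exp (-π / (t / π) * (n : ℝ) ^ 2) := by
    unfold thetaMoment; congr 1; ext n; field_simp
  rw [h1, h2, key, ← sqrt_eq_rpow, ← mul_assoc, mul_one_div_cancel (by positivity), one_mul]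

lemma mul_thetaMoment_one_le_two (ht : 2 ≤ t) : t * thetaMoment 1 t ≤ 2 := by
  have ht0 : 0 < t := by linarith
  set x := exp (-t) with hx
  have hx1 : x < 1 := exp_lt_one_iff.mpr (by linarith)
  set f : ℤ → ℝ := fun j => ((j : ℝ) ^ 2) ^ 1 * exp (-(j : ℝ) ^ 2 * t)
  set g : ℕ → ℝ := fun n => f n + f (-n)
  have hsum : HasSum g (thetaMoment 1 t + f 0) :=
    (summable_thetaMoment 1 ht0 : Summable f).hasSum.nat_add_neg
  have hgeom : Summable fun n : ℕ => 2 * x ^ (n + 1) :=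
    ((summable_geometric_of_lt_one (exp_pos _).le hx1).mul_left x).mul_left 2 |>.congr
      fun n => by ring
  have hF1 : thetaMoment 1 t = ∑' n : ℕ, g (n + 1) := by
    have h0 : g 0 = 0 := by simp [g, f]
    rw [← zero_add (∑' n : ℕ, g (n + 1)), ← h0, ← hsum.summable.tsum_eq_zero_add, hsum.tsum_eq]
    simp [f]
  have hbound : thetaMoment 1 t ≤ 2 * (x * (1 - x)⁻¹) := calc
    thetaMoment 1 t = ∑' n : ℕ, g (n + 1) := hF1
    _ ≤ ∑' n : ℕ, 2 * x ^ (n + 1) := by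
      refine ((summable_nat_add_iff 1).mpr hsum.summable).tsum_le_tsum (fun n => ?_) hgeom
      have := sq_mul_exp_neg_sq_mul_le_exp_neg_mul (m := (n : ℝ) + 1) (by simp) ht
      rw [hx, ← exp_nat_mul]
      simp only [g, f, pow_one, Nat.cast_add, Nat.cast_one, Int.cast_natCast, Int.cast_neg,
        neg_sq]
      rw [mul_neg]
      linarith
    _ = 2 * (x * (1 - x)⁻¹) := by
      rw [tsum_mul_left]
      simp_rw [pow_succ']
      rw [tsum_mul_left, tsum_geometric_of_lt_one (exp_pos _).le hx1]
  have hxt : x * (1 + t) ≤ 1 := calc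
    x * (1 + t) ≤ x * exp t := by gcongr; linarith [add_one_le_exp t]
    _ = 1 := by rw [hx, ← exp_add]; simp
  calc t * thetaMoment 1 t ≤ t * (2 * (x * (1 - x)⁻¹)) := by gcongr
    _ ≤ 2 := by
      rw [← div_eq_mul_inv, mul_div_assoc', mul_div_assoc', div_le_iff₀ (by linarith)]
      nlinarith

end thetaMoment

noncomputable def thetaElasticity (t : ℝ) : ℝ := -(t * thetaMoment 1 t) / thetaMoment 0 t

section thetaElasticity

variable {t : ℝ}

lemma hasDerivAt_thetaElasticity (ht : 0 < t) :
    HasDerivAt thetaElasticity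
      (((t * thetaMoment 2 t - thetaMoment 1 t) * thetaMoment 0 t - t * thetaMoment 1 t ^ 2)
        / thetaMoment 0 t ^ 2) t := by
  have hF0 : thetaMoment 0 t ≠ 0 := (thetaMoment_pos 0 ht).ne'
  refine ((((hasDerivAt_id' t).mul (hasDerivAt_thetaMoment 1 ht)).neg).div
    (hasDerivAt_thetaMoment 0 ht) hF0).congr_deriv ?_
  simp only [Pi.neg_apply, Pi.mul_apply]
  field_simp
  ring

lemma thetaElasticity_inversion (ht : 0 < t) :
    thetaElasticity (π ^ 2 / t) = -thetaElasticity t - 1 / 2 := by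
  set ψ : ℝ → ℝ := fun y => log (thetaMoment 0 y) + log y / 4
  have hψ : ∀ y, 0 < y → HasDerivAt ψ (-thetaMoment 1 y / thetaMoment 0 y + y⁻¹ / 4) y :=
    fun y hy => ((hasDerivAt_thetaMoment 0 hy).log (thetaMoment_pos 0 hy).ne').add
      ((hasDerivAt_log hy.ne').div_const 4)
  have hψ_inv : ∀ y, 0 < y → ψ (π ^ 2 / y) = 1 * ψ y + 0 := fun y hy => by
    have hπ := pi_pos
    simp only [ψ, thetaMoment_zero_inversion hy]
    rw [log_mul (by positivity) (thetaMoment_pos 0 hy).ne', log_sqrt (by positivity),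
      log_div (by positivity) hy.ne', log_div hy.ne' hπ.ne', log_pow]
    ring
  have h_euler : ∀ y, 0 < y → y * deriv ψ y = thetaElasticity y + 1 / 4 := fun y hy => by
    rw [(hψ y hy).deriv, thetaElasticity]
    field_simp
  have key := mul_deriv_div_eq_of_comp_div_eq (by positivity)
    (fun y hy => (hψ y hy).differentiableAt) hψ_inv ht
  rw [h_euler _ (by positivity), h_euler _ ht] at key
  linarith

lemma mul_deriv_thetaElasticity_inversion (ht : 0 < t) :
    t * deriv thetaElasticity t = π ^ 2 / t * deriv thetaElasticity (π ^ 2 / t) := by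
  have key := mul_deriv_div_eq_of_comp_div_eq (by positivity)
    (fun y hy => (hasDerivAt_thetaElasticity hy).differentiableAt)
    (fun y hy => (thetaElasticity_inversion hy).trans (by ring)) (a := -1) (b := -1 / 2) ht
  linarith

lemma deriv_thetaElasticity_pos_of_three_lt (ht : 3 < t) : 0 < deriv thetaElasticity t := by
  have ht0 : 0 < t := by linarith
  rw [(hasDerivAt_thetaElasticity ht0).deriv]
  have hF0 := one_le_thetaMoment_zero ht0
  have hF1 := thetaMoment_pos 1 ht0
  have hF12 := thetaMoment_le_thetaMoment_succ one_ne_zero ht0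
  have htF1 := mul_thetaMoment_one_le_two (t := t) (by linarith)
  refine div_pos ?_ (by positivity)
  calc 0 < thetaMoment 1 t * (t - 3) := by nlinarith
    _ ≤ thetaMoment 1 t * ((t - 1) * thetaMoment 0 t - t * thetaMoment 1 t) :=
      mul_le_mul_of_nonneg_left (by nlinarith) hF1.le
    _ ≤ (t * thetaMoment 2 t - thetaMoment 1 t) * thetaMoment 0 t - t * thetaMoment 1 t ^ 2 := by
      have := mul_nonneg (mul_nonneg ht0.le (thetaMoment_nonneg 0 t)) (sub_nonneg.mpr hF12)
      linear_combination this

lemma deriv_thetaElasticity_pos (ht : 0 < t) : 0 < deriv thetaElasticity t := by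
  rcases lt_or_ge 3 t with hlarge | hsmall
  · exact deriv_thetaElasticity_pos_of_three_lt hlarge
  · have hπ := pi_gt_three
    have hinv : 3 < π ^ 2 / t := by rw [lt_div_iff₀ ht]; nlinarith
    have : 0 < t * deriv thetaElasticity t := by
      rw [mul_deriv_thetaElasticity_inversion ht]
      exact mul_pos (by positivity) (deriv_thetaElasticity_pos_of_three_lt hinv)
    exact pos_of_mul_pos_right this ht.le

end thetaElasticity

lemma Θ_eq_thetaMoment_zero : Θ = thetaMoment 0 := by
  ext t
  refine tsum_congr fun j => ?_
  rw [← exp_nat_mul]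
  push_cast [Nat.cast_natAbs, sq_abs]
  ring_nf

lemma Hfun_eq_mul_deriv_thetaElasticity {t : ℝ} (ht : 0 < t) :
    Hfun t = t * thetaMoment 0 t ^ 2 * deriv thetaElasticity t := by
  have hderiv : deriv Θ =ᶠ[nhds t] fun y => -thetaMoment 1 y := by
    filter_upwards [Ioi_mem_nhds ht] with y hy
    rw [Θ_eq_thetaMoment_zero]
    exact (hasDerivAt_thetaMoment 0 hy).deriv
  have hderiv2 : iteratedDeriv 2 Θ t = thetaMoment 2 t := by
    rw [iteratedDeriv_succ, iteratedDeriv_one, hderiv.deriv_eq]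
    exact (hasDerivAt_thetaMoment 1 ht).neg.deriv.trans (neg_neg _)
  rw [Hfun, hderiv.eq_of_nhds, hderiv2, (hasDerivAt_thetaElasticity ht).deriv,
    Θ_eq_thetaMoment_zero]
  field_simp [(thetaMoment_pos 0 ht).ne']
  ring

lemma Hfun_pos {t : ℝ} (ht : 0 < t) : 0 < Hfun t := by
  have := deriv_thetaElasticity_pos ht
  have := thetaMoment_pos 0 ht
  rw [Hfun_eq_mul_deriv_thetaElasticity ht]
  positivity

/-- No transition point for completely monotone potentials: if `μ` is a nonnegative,
nonzero Borel measure on `(0,∞)` and `E₂(A) := (1/2)∫₀^∞ H(As) dμ(s)`, then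
`E₂(A) > 0` for every `A > 0`; in particular `E₂` has no zero and no sign change. -/
theorem no_transition_point_completely_monotone
    (μ : Measure ℝ) (hμ : μ (Set.Ioi 0) ≠ 0)
    (hint : ∀ A : ℝ, 0 < A → IntegrableOn (fun s => Hfun (A * s)) (Set.Ioi 0) μ)
    (E₂ : ℝ → ℝ)
    (hE₂ : ∀ A : ℝ, E₂ A = (1 / 2) * ∫ s in Set.Ioi (0 : ℝ), Hfun (A * s) ∂μ) :
    ∀ A : ℝ, 0 < A → 0 < E₂ A := by
  intro A hA
  rw [hE₂ A]
  have := setIntegral_pos_of_forall_pos measurableSet_Ioi hμ (hint A hA)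
    fun s hs => Hfun_pos (mul_pos hA hs)
  positivity
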